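/- Let F_n(θ) = Z_n(e^{−imθ}) · (1/(n+1)) ∑_{k=1}^{n+1} e^{iθ X_k}, where (X_k) are the values of a branching random walk with i.i.d. increments Δ (of characteristic function Φ) built on the random recursive tree, and Z_n(x) = ∏_{j=1}^n ((j−1)/j + x/j). Then for every n ≥ 1 and θ, E[F_n(θ)] = (1/(n+1)) · Z_n(e^{−imθ}) · Z_n(Φ(θ) + 1) = (1/(n+1)) · Z_n(e^{−imθ}) · ∏_{j=1}^n (1 + Φ(θ)/j). -/

import Mathlib

open MeasureTheory

/-- `Z_n(x) = ∏_{j=1}^n ((j−1)/j + x/j)`. -/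
noncomputable def Zc (n : ℕ) (x : ℂ) : ℂ :=
  ∏ j ∈ Finset.Icc 1 n, (((j : ℂ) - 1) / j + x / j)

/-- The law of the label vector `(X₁, …, X_{n+1})` of the branching random walk with
i.i.d. increments of law `ν` built on the random recursive tree: the root has label `0`,
and each new node attaches to a uniformly chosen existing node, its label being its
parent's label plus an independent increment. -/
noncomputable def brwLaw (ν : Measure ℝ) : (n : ℕ) → Measure (Fin (n + 1) → ℝ)
  | 0 => Measure.dirac (fun _ => 0)
  | n + 1 => (brwLaw ν n).bind fun xs =>
      ((PMF.uniformOfFintype (Fin (n + 1))).toMeasure).bind fun k =>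
        Measure.map (fun d => Fin.snoc xs (xs k + d)) ν

/-!
Write `S(xs) = ∑ₖ e^{iθ xₖ}`. Given the first `n + 1` labels, the new node attaches to a uniform
node `k` and gets label `xₖ + Δ`, so it contributes `e^{iθ xₖ} Φ(θ)` on average; averaging over
`k` gives `E[S(X⁽ⁿ⁺¹⁾) | X⁽ⁿ⁾] = (1 + Φ(θ)/(n+1)) S(X⁽ⁿ⁾)`, and iterating from `S(X⁽⁰⁾) = 1` gives
`E[S(X⁽ⁿ⁾)] = ∏ⱼ (1 + Φ(θ)/j) = Z_n(Φ(θ) + 1)`.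
-/

open ProbabilityTheory Complex

lemma Zc_add_one (n : ℕ) (x : ℂ) : Zc n (x + 1) = ∏ j ∈ Finset.Icc 1 n, (1 + x / j) := by
  refine Finset.prod_congr rfl fun j hj => ?_
  have hj : (j : ℂ) ≠ 0 := Nat.cast_ne_zero.mpr (by grind)
  field_simp
  ring

lemma charFun_eq_integral_exp_I_mul (ν : Measure ℝ) (θ : ℝ) :
    charFun ν θ = ∫ x, exp (I * θ * x) ∂ν := by
  simp_rw [charFun_apply_real, mul_comm I, mul_right_comm _ I]

section Kernels

variable {α β γ : Type*} [MeasurableSpace α] [MeasurableSpace β] [MeasurableSpace γ]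

lemma integral_bind_eq_integral_integral {E : Type*} [NormedAddCommGroup E] [NormedSpace ℝ E]
    {μ : Measure α} [SFinite μ] {κ : Kernel α β} [IsSFiniteKernel κ] {f : β → E}
    (hf : Integrable f (κ ∘ₘ μ)) :
    ∫ b, f b ∂(κ ∘ₘ μ) = ∫ a, ∫ b, f b ∂κ a ∂μ := by
  have hf_meas : AEStronglyMeasurable f ((μ ⊗ₘ κ).map Prod.snd) := by
    rw [← Measure.snd, Measure.snd_compProd]
    exact hf.1
  rw [← Measure.snd_compProd, Measure.snd, integral_map measurable_snd.aemeasurable hf_meas,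
    Measure.integral_compProd ((Measure.integrable_compProd_snd_iff hf.1).2 hf)]

lemma measurable_map_of_measurable_uncurry (ν : Measure β) [SFinite ν] {f : α → β → γ}
    (hf : Measurable (Function.uncurry f)) : Measurable fun a => ν.map (f a) := by
  have h_map : ∀ a, ν.map (f a) = (ν.map (Prod.mk a)).map (Function.uncurry f) := fun a => by
    rw [Measure.map_map hf measurable_prodMk_left]
    rfl
  simp_rw [h_map]
  exact (Measure.measurable_map _ hf).comp Measurable.map_prodMk_left

lemma measurable_bind_of_countable {ι : Type*} [Countable ι] [MeasurableSpace ι]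
    [MeasurableSingletonClass ι] (μ : Measure ι) {F : α → ι → Measure β}
    (hF : ∀ i, Measurable fun a => F a i) : Measurable fun a => μ.bind (F a) := by
  refine Measure.measurable_of_measurable_coe _ fun s hs => ?_
  simp_rw [Measure.bind_apply hs (measurable_of_countable _).aemeasurable, lintegral_countable']
  exact Measurable.tsum fun i => ((Measure.measurable_coe hs).comp (hF i)).mul_const _

end Kernels

section RandomRecursiveTree

variable (ν : Measure ℝ)

noncomputable def attachKernel {n : ℕ} (xs : Fin (n + 1) → ℝ) :
    Kernel (Fin (n + 1)) (Fin (n + 2) → ℝ) where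
  toFun k := ν.map fun d => Fin.snoc xs (xs k + d)
  measurable' := measurable_of_countable _

noncomputable def brwStep [SFinite ν] (n : ℕ) : Kernel (Fin (n + 1) → ℝ) (Fin (n + 2) → ℝ) where
  toFun xs := attachKernel ν xs ∘ₘ (PMF.uniformOfFintype (Fin (n + 1))).toMeasure
  measurable' := measurable_bind_of_countable _ fun _ =>
    measurable_map_of_measurable_uncurry ν (by fun_prop)

lemma brwLaw_succ [SFinite ν] (n : ℕ) : brwLaw ν (n + 1) = brwStep ν n ∘ₘ brwLaw ν n := rfl

variable [IsProbabilityMeasure ν] {n : ℕ}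

instance (xs : Fin (n + 1) → ℝ) : IsMarkovKernel (attachKernel ν xs) :=
  ⟨fun _ => Measure.isProbabilityMeasure_map (by fun_prop)⟩

instance : IsMarkovKernel (brwStep ν n) :=
  ⟨fun _ => by dsimp [brwStep]; infer_instance⟩

instance (n : ℕ) : IsProbabilityMeasure (brwLaw ν n) := by
  induction n with
  | zero => exact Measure.dirac.isProbabilityMeasure
  | succ n _ => rw [brwLaw_succ]; infer_instance

lemma integral_brwStep {E : Type*} [NormedAddCommGroup E] [NormedSpace ℝ E] [CompleteSpace E]
    {f : (Fin (n + 2) → ℝ) → E} (hf : StronglyMeasurable f) (xs : Fin (n + 1) → ℝ)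
    (hf_int : Integrable f (brwStep ν n xs)) :
    ∫ ys, f ys ∂brwStep ν n xs = ((n : ℝ) + 1)⁻¹ • ∑ k, ∫ d, f (Fin.snoc xs (xs k + d)) ∂ν := by
  rw [brwStep, Kernel.coe_mk, integral_bind_eq_integral_integral hf_int, PMF.integral_eq_sum,
    Finset.smul_sum]
  refine Finset.sum_congr rfl fun k _ => ?_
  rw [attachKernel, Kernel.coe_mk, integral_map (by fun_prop) hf.aestronglyMeasurable]
  simp [ENNReal.toReal_add]

end RandomRecursiveTree

section ExpSum

variable (θ : ℝ) {m : ℕ}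

noncomputable def expSum (xs : Fin m → ℝ) : ℂ := ∑ k, exp (I * θ * xs k)

lemma norm_exp_I_mul_ofReal_mul (x : ℝ) : ‖exp (I * θ * x)‖ = 1 := by
  simp [norm_exp]

lemma continuous_expSum : Continuous (expSum θ (m := m)) := by
  unfold expSum
  fun_prop

lemma norm_expSum_le (xs : Fin m → ℝ) : ‖expSum θ xs‖ ≤ m :=
  (norm_sum_le _ _).trans_eq <| by simp [norm_exp_I_mul_ofReal_mul]

lemma integrable_expSum (μ : Measure (Fin m → ℝ)) [IsFiniteMeasure μ] :
    Integrable (expSum θ) μ :=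
  .of_bound (continuous_expSum θ).aestronglyMeasurable m (ae_of_all _ (norm_expSum_le θ))

lemma expSum_snoc (xs : Fin m → ℝ) (y : ℝ) :
    expSum θ (Fin.snoc xs y : Fin (m + 1) → ℝ) = expSum θ xs + exp (I * θ * y) := by
  simp [expSum, Fin.sum_univ_castSucc]

end ExpSum

section Expectation

variable (ν : Measure ℝ) [IsProbabilityMeasure ν] (θ : ℝ)

lemma integral_expSum_brwStep {n : ℕ} (xs : Fin (n + 1) → ℝ) :
    ∫ ys, expSum θ ys ∂brwStep ν n xs = (1 + charFun ν θ / (n + 1)) * expSum θ xs := by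
  have h_attach : ∀ k, ∫ d, expSum θ (Fin.snoc xs (xs k + d) : Fin (n + 2) → ℝ) ∂ν
      = expSum θ xs + exp (I * θ * xs k) * charFun ν θ := fun k => by
    simp_rw [expSum_snoc, ofReal_add, mul_add, exp_add]
    have h_int : Integrable (fun d : ℝ => exp (I * θ * d)) ν :=
      .of_bound (by fun_prop) 1 (ae_of_all _ (norm_exp_I_mul_ofReal_mul θ · |>.le))
    rw [integral_add (integrable_const _) (h_int.const_mul _), integral_const, probReal_univ,
      one_smul, integral_const_mul, charFun_eq_integral_exp_I_mul]
  rw [integral_brwStep ν (continuous_expSum θ).stronglyMeasurable xs (integrable_expSum θ _)]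
  simp_rw [h_attach]
  rw [Finset.sum_add_distrib, Finset.sum_const, Finset.card_univ, Fintype.card_fin,
    ← Finset.sum_mul]
  simp only [expSum, nsmul_eq_mul, Complex.real_smul]
  push_cast
  field_simp

lemma integral_expSum_brwLaw (n : ℕ) :
    ∫ xs, expSum θ xs ∂brwLaw ν n = ∏ j ∈ Finset.Icc 1 n, (1 + charFun ν θ / j) := by
  induction n with
  | zero => simp [brwLaw, expSum]
  | succ n ih =>
    rw [brwLaw_succ, integral_bind_eq_integral_integral (integrable_expSum θ _)]
    simp_rw [integral_expSum_brwStep]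
    rw [integral_const_mul, ih, Finset.prod_Icc_succ_top (by omega)]
    push_cast
    ring

end Expectation

theorem stmt_15_general (ν : Measure ℝ) [IsProbabilityMeasure ν]
    (θ : ℝ) (n : ℕ) :
    (∫ xs, Zc n (Complex.exp (-Complex.I * ((∫ x, x ∂ν : ℝ) : ℂ) * (θ : ℂ))) *
          ((n : ℂ) + 1)⁻¹ *
          ∑ kk : Fin (n + 1), Complex.exp (Complex.I * (θ : ℂ) * (xs kk : ℂ))
        ∂(brwLaw ν n))
      = ((n : ℂ) + 1)⁻¹ * Zc n (Complex.exp (-Complex.I * ((∫ x, x ∂ν : ℝ) : ℂ) * (θ : ℂ))) *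
          Zc n ((∫ x, Complex.exp (Complex.I * (θ : ℂ) * (x : ℂ)) ∂ν) + 1) ∧
    Zc n ((∫ x, Complex.exp (Complex.I * (θ : ℂ) * (x : ℂ)) ∂ν) + 1)
      = ∏ j ∈ Finset.Icc 1 n,
          (1 + (∫ x, Complex.exp (Complex.I * (θ : ℂ) * (x : ℂ)) ∂ν) / (j : ℂ)) := by
  have h_sum : ∫ xs, ∑ k : Fin (n + 1), exp (I * θ * xs k) ∂brwLaw ν n
      = ∏ j ∈ Finset.Icc 1 n, (1 + charFun ν θ / j) :=
    integral_expSum_brwLaw ν θ n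
  rw [← charFun_eq_integral_exp_I_mul, Zc_add_one]
  refine ⟨?_, rfl⟩
  rw [integral_const_mul, h_sum]
  ring

/-- with `m = E[Δ]`, `Φ(θ) = E[e^{iθΔ}]` and
`F_n(θ) = Z_n(e^{−imθ}) (n+1)^{−1} ∑_{k=1}^{n+1} e^{iθX_k}`, one has
`E[F_n(θ)] = (n+1)^{−1} Z_n(e^{−imθ}) Z_n(Φ(θ)+1) = (n+1)^{−1} Z_n(e^{−imθ}) ∏_{j=1}^n (1+Φ(θ)/j)`. -/
theorem stmt_15 (ν : Measure ℝ) [IsProbabilityMeasure ν]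
    (hint : Integrable (fun x : ℝ => x) ν) (θ : ℝ) (n : ℕ) (hn : 1 ≤ n) :
    (∫ xs, Zc n (Complex.exp (-Complex.I * ((∫ x, x ∂ν : ℝ) : ℂ) * (θ : ℂ))) *
          ((n : ℂ) + 1)⁻¹ *
          ∑ kk : Fin (n + 1), Complex.exp (Complex.I * (θ : ℂ) * (xs kk : ℂ))
        ∂(brwLaw ν n))
      = ((n : ℂ) + 1)⁻¹ * Zc n (Complex.exp (-Complex.I * ((∫ x, x ∂ν : ℝ) : ℂ) * (θ : ℂ))) *
          Zc n ((∫ x, Complex.exp (Complex.I * (θ : ℂ) * (x : ℂ)) ∂ν) + 1) ∧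
    Zc n ((∫ x, Complex.exp (Complex.I * (θ : ℂ) * (x : ℂ)) ∂ν) + 1)
      = ∏ j ∈ Finset.Icc 1 n,
          (1 + (∫ x, Complex.exp (Complex.I * (θ : ℂ) * (x : ℂ)) ∂ν) / (j : ℂ)) :=
  stmt_15_general ν θ n
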